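/- arXiv:1211.0621 — 3 statements merged into one kernel-verified Lean document; each statement's English description precedes it below -/
import Mathlib

section
/- Let a group Γ act transitively on a countably infinite set X such that the associated random walk is transient-in-distribution: for a fixed symmetric finitely supported step distribution, the n-step transition probabilities p_n(x,y) tend to 0 for every pair x, y ∈ X. Then for every finite set S ⊆ X there exists g ∈ Γ with gS ∩ S = ∅. -/
open scoped Classical

open Filter Topology

/-!
Let `P n` be the `n`-th convolution power of `μ`; it is a probability distribution on `Γ`.
If no element of `Γ` moves the finite set `S` off itself, then every `g ∈ Γ` maps some
`x ∈ S` to some `y ∈ S`, so the total mass `1` of `P n` is bounded by the finite sum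
`∑_{x, y ∈ S} p_n(x, y)`, which tends to `0`.
-/

structure IsProbabilityWeight {Γ : Type*} (f : Γ → ℝ) : Prop where
  summable : Summable f
  nonneg : ∀ g, 0 ≤ f g
  tsum_eq_one : ∑' g, f g = 1

namespace IsProbabilityWeight

variable {Γ : Type*}

lemma dirac [One Γ] : IsProbabilityWeight (fun g : Γ => if g = 1 then (1 : ℝ) else 0) where
  summable := summable_of_ne_finset_zero (s := {1}) fun _ hg =>
    if_neg (Finset.mem_singleton.not.mp hg)
  nonneg g := by split_ifs <;> norm_num
  tsum_eq_one := tsum_ite_eq 1 (fun _ => 1)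

lemma conv [Group Γ] {f μ : Γ → ℝ} (hf : IsProbabilityWeight f)
    (hμ : IsProbabilityWeight μ) (hμfin : (Function.support μ).Finite) :
    IsProbabilityWeight (fun g => ∑' h, μ h * f (h⁻¹ * g)) := by
  set F := hμfin.toFinset
  have hF : ∀ h ∉ F, μ h = 0 := fun h hh => by simpa [F] using hh
  have hfinite : ∀ g, ∑' h, μ h * f (h⁻¹ * g) = ∑ h ∈ F, μ h * f (h⁻¹ * g) :=
    fun g => tsum_eq_sum fun h hh => by rw [hF h hh, zero_mul]
  have htranslate : ∀ h, ∑' g, f (h⁻¹ * g) = 1 :=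
    fun h => ((Equiv.mulLeft h⁻¹).tsum_eq f).trans hf.tsum_eq_one
  have hsummand : ∀ h, Summable fun g => μ h * f (h⁻¹ * g) :=
    fun h => (((Equiv.mulLeft h⁻¹).summable_iff).mpr hf.summable).mul_left (μ h)
  simp_rw [hfinite]
  refine ⟨summable_sum fun h _ => hsummand h,
    fun g => Finset.sum_nonneg fun h _ => mul_nonneg (hμ.nonneg h) (hf.nonneg _), ?_⟩
  rw [Summable.tsum_finsetSum fun h _ => hsummand h, ← hμ.tsum_eq_one, tsum_eq_sum hF]
  exact Finset.sum_congr rfl fun h _ => by rw [tsum_mul_left, htranslate, mul_one]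

lemma of_conv_recursion [Group Γ] {μ : Γ → ℝ} (hμ : IsProbabilityWeight μ)
    (hμfin : (Function.support μ).Finite) {P : ℕ → Γ → ℝ}
    (hP0 : ∀ g : Γ, P 0 g = if g = 1 then 1 else 0)
    (hPs : ∀ (n : ℕ) (g : Γ), P (n + 1) g = ∑' h : Γ, μ h * P n (h⁻¹ * g)) (n : ℕ) :
    IsProbabilityWeight (P n) := by
  induction n with
  | zero => exact (funext hP0 : P 0 = _) ▸ dirac
  | succ n ih => exact (funext (hPs n) : P (n + 1) = _) ▸ ih.conv hμ hμfin

end IsProbabilityWeight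

lemma tsum_le_sum_sum_tsum_of_forall_exists_smul_mem {Γ X : Type*} [Monoid Γ] [MulAction Γ X]
    {f : Γ → ℝ} (hf : Summable f) (hf0 : ∀ g, 0 ≤ f g) {T : Finset X}
    (hT : ∀ g : Γ, ∃ x ∈ T, g • x ∈ T) :
    ∑' g, f g ≤ ∑ x ∈ T, ∑ y ∈ T, ∑' g : {g : Γ // g • x = y}, f g := by
  have hind : ∀ x y : X, Summable ({g : Γ | g • x = y}.indicator f) :=
    fun x y => hf.indicator _
  have hind0 : ∀ (x y : X) g, 0 ≤ {h : Γ | h • x = y}.indicator f g :=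
    fun x y => Set.indicator_nonneg fun g _ => hf0 g
  calc ∑' g, f g ≤ ∑' g, ∑ x ∈ T, ∑ y ∈ T, {h : Γ | h • x = y}.indicator f g := by
        refine hf.tsum_le_tsum (fun g => ?_)
          (summable_sum fun x _ => summable_sum fun y _ => hind x y)
        obtain ⟨x, hx, hgx⟩ := hT g
        calc f g = {h : Γ | h • x = g • x}.indicator f g :=
            (Set.indicator_of_mem (s := {h : Γ | h • x = g • x}) rfl f).symm
          _ ≤ ∑ y ∈ T, {h : Γ | h • x = y}.indicator f g :=
            Finset.single_le_sum (fun y _ => hind0 x y g) hgx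
          _ ≤ ∑ x ∈ T, ∑ y ∈ T, {h : Γ | h • x = y}.indicator f g :=
            Finset.single_le_sum (fun x _ => Finset.sum_nonneg fun y _ => hind0 x y g) hx
    _ = ∑ x ∈ T, ∑ y ∈ T, ∑' g, {h : Γ | h • x = y}.indicator f g := by
        rw [Summable.tsum_finsetSum fun x _ => summable_sum fun y _ => hind x y]
        exact Finset.sum_congr rfl fun x _ => Summable.tsum_finsetSum fun y _ => hind x y
    _ = ∑ x ∈ T, ∑ y ∈ T, ∑' g : {g : Γ // g • x = y}, f g := by
        simp_rw [← tsum_subtype]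
        rfl

theorem moving_off_of_transient_general {Γ X : Type*} [Group Γ] [MulAction Γ X]
    (μ : Γ → ℝ) (hμ0 : ∀ g, 0 ≤ μ g) (hμfin : (Function.support μ).Finite)
    (hμ1 : ∑' g : Γ, μ g = 1)
    (P : ℕ → Γ → ℝ)
    (hP0 : ∀ g : Γ, P 0 g = if g = 1 then 1 else 0)
    (hPs : ∀ (n : ℕ) (g : Γ), P (n + 1) g = ∑' h : Γ, μ h * P n (h⁻¹ * g))
    (hdecay : ∀ x y : X,
      Filter.Tendsto (fun n : ℕ => ∑' g : {g : Γ // g • x = y}, P n g.val)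
        Filter.atTop (nhds 0)) :
    ∀ S : Set X, S.Finite → ∃ g : Γ, ∀ s ∈ S, g • s ∉ S := by
  intro S hS
  by_contra! hstuck
  have hP := IsProbabilityWeight.of_conv_recursion
    ⟨summable_of_hasFiniteSupport hμfin, hμ0, hμ1⟩ hμfin hP0 hPs
  set T := hS.toFinset
  have hlim : Tendsto (fun n => ∑ x ∈ T, ∑ y ∈ T, ∑' g : {g : Γ // g • x = y}, P n g)
      atTop (𝓝 0) := by
    simpa using tendsto_finsetSum T fun x _ => tendsto_finsetSum T fun y _ => hdecay x y
  have hone : ∀ n, 1 ≤ ∑ x ∈ T, ∑ y ∈ T, ∑' g : {g : Γ // g • x = y}, P n g :=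
    fun n =>
      (hP n).tsum_eq_one ▸ tsum_le_sum_sum_tsum_of_forall_exists_smul_mem (hP n).summable
        (hP n).nonneg (by simpa [T] using hstuck)
  linarith [ge_of_tendsto' hlim hone]

/-- If the random walk on `X` induced by a symmetric finitely supported step
distribution `μ` on a group `Γ` acting transitively on a countably infinite set `X`
has `n`-step transition probabilities `p_n(x,y) = ∑_{g x = y} P_n(g)` tending to `0`
for every pair `x, y`, then every finite subset of `X` can be moved off itself by
some element of `Γ`. -/
theorem moving_off_of_transient {Γ X : Type*} [Group Γ] [MulAction Γ X]
    [Countable Γ] [Countable X] [Infinite X]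
    (htrans : MulAction.IsPretransitive Γ X)
    (μ : Γ → ℝ) (hμ0 : ∀ g, 0 ≤ μ g) (hμfin : (Function.support μ).Finite)
    (hμsym : ∀ g : Γ, μ g⁻¹ = μ g) (hμ1 : ∑' g : Γ, μ g = 1)
    (P : ℕ → Γ → ℝ)
    (hP0 : ∀ g : Γ, P 0 g = if g = 1 then 1 else 0)
    (hPs : ∀ (n : ℕ) (g : Γ), P (n + 1) g = ∑' h : Γ, μ h * P n (h⁻¹ * g))
    (hdecay : ∀ x y : X,
      Filter.Tendsto (fun n : ℕ => ∑' g : {g : Γ // g • x = y}, P n g.val)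
        Filter.atTop (nhds 0)) :
    ∀ S : Set X, S.Finite → ∃ g : Γ, ∀ s ∈ S, g • s ∉ S :=
  moving_off_of_transient_general μ hμ0 hμfin hμ1 P hP0 hPs hdecay
end

section
/- Let Γᵏ = (ℤ/2ℤ)^{*k} be the k-fold free product of cyclic groups of order 2, k ≥ 3, acting transitively and faithfully on a countably infinite set X. Then for every 1 ≠ w ∈ Γᵏ, the set {y ∈ X : w·y ≠ y} is infinite. -/
/-!
A finitely supported element of a faithful action has finite order, since it is the extension by
the identity of a permutation of its finite support, and commutators of finitely supported
elements with arbitrary ones are again finitely supported. So it suffices to find, for every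
`g ≠ 1`, a commutator `⁅h, g⁆` of infinite order. Write `g` as a reduced word `w` beginning in
the factor `i` and ending in the factor `j`, and pick `m ≠ 1` in a third factor `l`. Then
`m w m⁻¹ w⁻¹` is a reduced word beginning in `l` and ending in `i ≠ l`, so all its powers are
again nonempty reduced words, hence nontrivial.
-/

open MulAction Pointwise
open scoped commutatorElement

namespace Monoid.CoprodI

variable {ι : Type*} {G : ι → Type*} [∀ i, Group (G i)]

namespace NeWord

theorem prod_ne_one {i j : ι} (w : NeWord G i j) : w.prod ≠ 1 := by
  classical
  intro h
  have : w.toWord = Word.empty := Word.equiv.symm.injective (h.trans Word.prod_empty.symm)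
  exact w.toList_ne_nil (congrArg Word.toList this)

theorem exists_prod_eq_pow_succ {i j : ι} (hij : i ≠ j) (w : NeWord G i j) (n : ℕ) :
    ∃ v : NeWord G i j, v.prod = w.prod ^ (n + 1) := by
  induction n with
  | zero => exact ⟨w, (pow_one _).symm⟩
  | succ n ih =>
    obtain ⟨v, hv⟩ := ih
    exact ⟨v.append hij.symm w, by rw [append_prod, hv, ← pow_succ]⟩

theorem not_isOfFinOrder_prod {i j : ι} (hij : i ≠ j) (w : NeWord G i j) :
    ¬IsOfFinOrder w.prod := by
  rw [isOfFinOrder_iff_pow_eq_one]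
  rintro ⟨n, hn, hpow⟩
  obtain ⟨v, hv⟩ := exists_prod_eq_pow_succ hij w (n - 1)
  exact v.prod_ne_one (by rwa [hv, Nat.sub_add_cancel hn])

end NeWord

theorem exists_neWord_prod_eq {g : CoprodI G} (hg : g ≠ 1) :
    ∃ (i j : ι) (w : NeWord G i j), w.prod = g := by
  classical
  have hempty : Word.equiv g ≠ Word.empty := fun h => hg <| by
    rw [← Word.equiv.symm_apply_apply g, h]
    exact Word.prod_empty
  obtain ⟨i, j, w, hw⟩ := NeWord.of_word _ hempty
  exact ⟨i, j, w, by rw [NeWord.prod, hw]; exact Word.equiv.symm_apply_apply g⟩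

theorem exists_not_isOfFinOrder_commutatorElement [∀ i, Nontrivial (G i)]
    (hι : ∀ i j : ι, ∃ l, l ≠ i ∧ l ≠ j) {g : CoprodI G} (hg : g ≠ 1) :
    ∃ h : CoprodI G, ¬IsOfFinOrder ⁅h, g⁆ := by
  obtain ⟨i, j, w, rfl⟩ := exists_neWord_prod_eq hg
  obtain ⟨l, hli, hlj⟩ := hι i j
  obtain ⟨m, hm⟩ := exists_ne (1 : G l)
  let v : NeWord G l i := ((NeWord.singleton m hm).append hli w).append hlj.symm
    ((NeWord.singleton m⁻¹ (inv_ne_one.2 hm)).append hlj w.inv)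
  refine ⟨of m, ?_⟩
  convert v.not_isOfFinOrder_prod hli using 2
  simp only [v, NeWord.append_prod, NeWord.prod_singleton, NeWord.inv_prod, map_inv,
    commutatorElement_def, mul_assoc]

end Monoid.CoprodI

section

variable {Γ X : Type*} [Group Γ] [MulAction Γ X]

theorem finite_movedBy_commutatorElement {g : Γ} (hg : (fixedBy X g)ᶜ.Finite) (h : Γ) :
    (fixedBy X ⁅h, g⁆)ᶜ.Finite := by
  have hsub : (fixedBy X ⁅h, g⁆)ᶜ ⊆ h • (fixedBy X g)ᶜ ∪ (fixedBy X g)ᶜ := by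
    rw [Set.smul_set_compl, smul_fixedBy, ← fixedBy_inv X g, ← Set.compl_inter,
      commutatorElement_def]
    exact Set.compl_subset_compl.2 (fixedBy_mul X _ _)
  exact (hg.smul_set.union hg).subset hsub

theorem isOfFinOrder_of_finite_movedBy [FaithfulSMul Γ X] {g : Γ}
    (hg : (fixedBy X g)ᶜ.Finite) : IsOfFinOrder g := by
  classical
  have := hg.to_subtype
  have hperm : Equiv.Perm.ofSubtype ((toPerm g : Equiv.Perm X).subtypePerm
      (p := (· ∈ (fixedBy X g)ᶜ)) fun _ => smul_mem_fixedBy_iff_mem_fixedBy.not) =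
      toPermHom Γ X g :=
    Equiv.Perm.ofSubtype_subtypePerm _ fun _ hx => hx
  refine (toPerm_injective.isOfFinOrder_iff (f := toPermHom Γ X)).1 ?_
  exact hperm ▸ Equiv.Perm.ofSubtype.isOfFinOrder (isOfFinOrder_of_finite _)

end

theorem Fintype.exists_ne_and_ne {α : Type*} [Fintype α] (h : 3 ≤ Fintype.card α) (a b : α) :
    ∃ c, c ≠ a ∧ c ≠ b := by
  classical
  obtain ⟨c, -, hc⟩ := Finset.exists_mem_notMem_of_card_lt_card (s := {a, b}) (t := .univ)
    (Finset.card_le_two.trans_lt (by rw [Finset.card_univ]; omega))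
  exact ⟨c, by simpa [not_or] using hc⟩

theorem free_product_no_finite_support_general (k : ℕ) (hk : 3 ≤ k) {X : Type*}
    [MulAction (Monoid.CoprodI fun _ : Fin k => Multiplicative (ZMod 2)) X]
    (hfaith : ∀ g : Monoid.CoprodI fun _ : Fin k => Multiplicative (ZMod 2),
      (∀ x : X, g • x = x) → g = 1) :
    ∀ w : Monoid.CoprodI fun _ : Fin k => Multiplicative (ZMod 2), w ≠ 1 →
      {y : X | w • y ≠ y}.Infinite := by
  intro w hw hfin
  have := faithfulSMul_iff.2 hfaith
  obtain ⟨h, hh⟩ := Monoid.CoprodI.exists_not_isOfFinOrder_commutatorElement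
    (Fintype.exists_ne_and_ne (by simpa using hk)) hw
  exact hh (isOfFinOrder_of_finite_movedBy (finite_movedBy_commutatorElement hfin h))

/-- For the `k`-fold free product `Γᵏ = (ℤ/2ℤ)^{*k}`, `k ≥ 3`, acting transitively and
faithfully on a countably infinite set `X`, every nontrivial element moves infinitely
many points. -/
theorem free_product_no_finite_support (k : ℕ) (hk : 3 ≤ k) {X : Type*}
    [Countable X] [Infinite X]
    [MulAction (Monoid.CoprodI fun _ : Fin k => Multiplicative (ZMod 2)) X]
    (htrans : MulAction.IsPretransitive
      (Monoid.CoprodI fun _ : Fin k => Multiplicative (ZMod 2)) X)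
    (hfaith : ∀ g : Monoid.CoprodI fun _ : Fin k => Multiplicative (ZMod 2),
      (∀ x : X, g • x = x) → g = 1) :
    ∀ w : Monoid.CoprodI fun _ : Fin k => Multiplicative (ZMod 2), w ≠ 1 →
      {y : X | w • y ≠ y}.Infinite :=
  free_product_no_finite_support_general k hk hfaith
end

section
/- Let Γ be a finitely generated group with finite symmetric generating set mapped into permutations of ℤ by a homomorphism φ such that |φ(γ)(i) − i| ≤ ar for every γ a product of at most r generators and every i ∈ ℤ (displacement bound). Suppose n > 10aʳ is such that reducing modulo n preserves the local structure, i.e., for all γ, δ products of at most r generators with φ(γ) ≠ φ(δ) there is 0 ≤ j < n with φ(γ)(j) ≢ φ(δ)(j) mod n, and φ_r(γ) defined by φ_r(γ)(i mod n) = φ(γ)(i) mod n is a well-defined permutation of ℤ/nℤ. Then φ_r : W^r → Perm(ℤ/nℤ) is injective and satisfies φ_r(xy) = φ_r(x)φ_r(y) whenever x, y, xy ∈ W^r, where W^r is the set of products of at most r generators. -/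
/-- The set of products of at most `r` elements of `S`. -/
def WordSet {Γ : Type*} [Group Γ] (S : Finset Γ) (r : ℕ) : Set Γ :=
  {g : Γ | ∃ s : List Γ, s.length ≤ r ∧ (∀ t ∈ s, t ∈ S) ∧ s.prod = g}

/-- Reduction modulo `n` of a permutation representation `φ : Γ → Perm ℤ` with bounded
displacement: if `n > 10aʳ`, reduction mod `n` separates the permutations of elements
of `W^r`, and `ψ(γ)` is a permutation of `ℤ/nℤ` lifting `φ(γ)` mod `n`, then `ψ` is
injective and multiplicative on `W^r`. -/
theorem mod_n_reduction_partial_embedding {Γ : Type*} [Group Γ]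
    (S : Finset Γ) (hsym : ∀ s ∈ S, s⁻¹ ∈ S)
    (φ : Γ →* Equiv.Perm ℤ) (hφinj : Function.Injective φ)
    (a r : ℕ)
    (hdisp : ∀ γ ∈ WordSet S r, ∀ i : ℤ, |φ γ i - i| ≤ (a : ℤ) * r)
    (n : ℕ) (hn : 10 * a ^ r < n)
    (hsep : ∀ γ ∈ WordSet S r, ∀ δ ∈ WordSet S r, φ γ ≠ φ δ →
      ∃ j : ℤ, 0 ≤ j ∧ j < n ∧ ((φ γ j : ℤ) : ZMod n) ≠ ((φ δ j : ℤ) : ZMod n))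
    (ψ : Γ → Equiv.Perm (ZMod n))
    (hψ : ∀ γ ∈ WordSet S r, ∀ i : ℤ, ψ γ ((i : ZMod n)) = ((φ γ i : ℤ) : ZMod n)) :
    Set.InjOn ψ (WordSet S r) ∧
    ∀ x ∈ WordSet S r, ∀ y ∈ WordSet S r, x * y ∈ WordSet S r →
      ψ (x * y) = ψ x * ψ y := by
  constructor
  · intro γ hγ δ hδ h
    by_contra hne
    have hφne : φ γ ≠ φ δ := fun he => hne (hφinj he)
    obtain ⟨j, -, -, hj⟩ := hsep γ hγ δ hδ hφne
    exact hj (by rw [← hψ γ hγ j, ← hψ δ hδ j, h])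
  · intro x hx y hy hxy
    ext z
    obtain ⟨i, rfl⟩ := ZMod.intCast_surjective z
    have h1 := hψ (x * y) hxy i
    have h2 := hψ y hy i
    have h3 := hψ x hx (φ y i)
    simp only [Equiv.Perm.mul_apply, h2, h3, h1, map_mul]
end
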